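/- arXiv:2504.16437 — 2 statements merged into one kernel-verified Lean document; each statement's English description precedes it below -/
import Mathlib

section
/- Suppose u, u' are strings over alphabet Σ₁ and v, v' are strings over alphabet Σ₂ with Σ₁ ∩ Σ₂ = ∅. Then LCS(u ∘ v, u' ∘ v') = LCS(u, u') + LCS(v, v'). -/
/-- Length of a longest common subsequence of two strings (lists over ℕ). -/
noncomputable def LCS (x y : List ℕ) : ℕ :=
  sSup {k | ∃ s : List ℕ, s.Sublist x ∧ s.Sublist y ∧ s.length = k}

/-- Ulam distance between permutations, via `d_U(σ,τ) = |σ| − LCS(σ,τ)`. -/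
noncomputable def ulamDist (x y : List ℕ) : ℕ := x.length - LCS x y

/-- `π` is a permutation of `[n] = {1,…,n}` viewed as a string. -/
def IsPermOf (n : ℕ) (π : List ℕ) : Prop := π.Perm (List.range' 1 n)

lemma lcs_bddAbove (x y : List ℕ) :
    BddAbove {k | ∃ s : List ℕ, s.Sublist x ∧ s.Sublist y ∧ s.length = k} := by
  refine ⟨x.length, ?_⟩
  rintro k ⟨s, hsx, _, rfl⟩
  exact hsx.length_le

lemma lcs_nonempty (x y : List ℕ) :
    {k | ∃ s : List ℕ, s.Sublist x ∧ s.Sublist y ∧ s.length = k}.Nonempty :=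
  ⟨0, [], List.nil_sublist _, List.nil_sublist _, rfl⟩

lemma lcs_witness (x y : List ℕ) :
    ∃ s : List ℕ, s.Sublist x ∧ s.Sublist y ∧ s.length = LCS x y :=
  Nat.sSup_mem (lcs_nonempty x y) (lcs_bddAbove x y)

lemma le_lcs (x y s : List ℕ) (hx : s.Sublist x) (hy : s.Sublist y) :
    s.length ≤ LCS x y :=
  le_csSup (lcs_bddAbove x y) ⟨s, hx, hy, rfl⟩

theorem lcs_append_disjoint (S1 S2 : Set ℕ) (hdisj : Disjoint S1 S2)
    (u u' v v' : List ℕ)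
    (hu : ∀ c ∈ u, c ∈ S1) (hu' : ∀ c ∈ u', c ∈ S1)
    (hv : ∀ c ∈ v, c ∈ S2) (hv' : ∀ c ∈ v', c ∈ S2) :
    LCS (u ++ v) (u' ++ v') = LCS u u' + LCS v v' := by
  apply le_antisymm
  · -- upper bound
    apply csSup_le (lcs_nonempty _ _)
    rintro k ⟨s, hs1, hs2, rfl⟩
    rw [List.sublist_append_iff] at hs1 hs2
    obtain ⟨a, b, rfl, hau, hbv⟩ := hs1
    obtain ⟨c, d, hcd, hcu', hdv'⟩ := hs2
    have ha : ∀ x ∈ a, x ∈ S1 := fun x hx => hu x (hau.subset hx)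
    have hb : ∀ x ∈ b, x ∈ S2 := fun x hx => hv x (hbv.subset hx)
    have hc : ∀ x ∈ c, x ∈ S1 := fun x hx => hu' x (hcu'.subset hx)
    have hd : ∀ x ∈ d, x ∈ S2 := fun x hx => hv' x (hdv'.subset hx)
    have hac : a = c ∧ b = d := by
      rcases List.append_eq_append_iff.mp hcd with ⟨w, hw1, hw2⟩ | ⟨w, hw1, hw2⟩
      · -- c = a ++ w, b = w ++ d
        have hw : w = [] := by
          cases w with
          | nil => rfl
          | cons x xs =>
            exfalso
            have h1 : x ∈ S1 := hc x (by simp [hw1])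
            have h2 : x ∈ S2 := hb x (by simp [hw2])
            exact Set.disjoint_left.mp hdisj h1 h2
        subst hw; simp at hw1 hw2; exact ⟨hw1.symm, hw2⟩
      · -- a = c ++ w, d = w ++ b
        have hw : w = [] := by
          cases w with
          | nil => rfl
          | cons x xs =>
            exfalso
            have h1 : x ∈ S1 := ha x (by simp [hw1])
            have h2 : x ∈ S2 := hd x (by simp [hw2])
            exact Set.disjoint_left.mp hdisj h1 h2
        subst hw; simp at hw1 hw2; exact ⟨hw1, hw2.symm⟩
    obtain ⟨rfl, rfl⟩ := hac
    simp only [List.length_append]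
    exact Nat.add_le_add (le_lcs _ _ _ hau hcu') (le_lcs _ _ _ hbv hdv')
  · -- lower bound
    obtain ⟨s, hsu, hsu', hslen⟩ := lcs_witness u u'
    obtain ⟨t, htv, htv', htlen⟩ := lcs_witness v v'
    calc LCS u u' + LCS v v' = (s ++ t).length := by simp [hslen, htlen]
      _ ≤ LCS (u ++ v) (u' ++ v') :=
        le_lcs _ _ _ (hsu.append htv) (hsu'.append htv')
end

section
/- Fix n and let N = 3n+2. Let X₁ = (n+1)(n+2)⋯(2n+1) and X₂ = (2n+2)(2n+3)⋯(3n+2). Define π^L = 1∘2∘⋯∘n ∘ X₁ ∘ X₂ and π^R = X₁ ∘ n∘(n−1)∘⋯∘1 ∘ X₂. For a partition A ⊔ B = [n] with A = {a₁ < a₂ < ⋯ < a_r} and B = {b₁ > b₂ > ⋯ > b_{n−r}}, define π^{A,B} = a₁⋯a_r ∘ X₁ ∘ b₁⋯b_{n−r} ∘ X₂. Then d_U(π^{A,B}, π^L) + d_U(π^{A,B}, π^R) = n; specifically d_U(π^{A,B}, π^L) = n − r and d_U(π^{A,B}, π^R) = r. -/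
/-!
A common subsequence of `π^{A,B}` and a permutation `w` is a chain of `π^{A,B}` for the order in
which `w` lists its letters. For `π^L` this is the usual order: an increasing subsequence of
`a ∘ X₁ ∘ b ∘ X₂` takes at most `|X₁|` letters from `X₁ ∘ b`, since `b` lies below `X₁` and is
decreasing, so the longest one is `a ∘ X₁ ∘ X₂`. For `π^R` it is the order by position in `π^R`,
under which `a` lies above `X₁` and is decreasing, so the longest chain is `X₁ ∘ b ∘ X₂`.
-/

open List

lemma le_LCS {x y s : List ℕ} (hx : s <+ x) (hy : s <+ y) : s.length ≤ LCS x y :=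
  le_csSup ⟨x.length, fun _ ⟨_, htx, _, ht⟩ => ht ▸ htx.length_le⟩ ⟨s, hx, hy, rfl⟩

lemma LCS_le {x y : List ℕ} {m : ℕ} (h : ∀ s, s <+ x → s <+ y → s.length ≤ m) : LCS x y ≤ m :=
  csSup_le ⟨0, [], nil_sublist x, nil_sublist y, rfl⟩ fun _ ⟨s, hx, hy, hs⟩ => hs ▸ h s hx hy

lemma LCS_le_of_pairwise {r : ℕ → ℕ → Prop} {x y : List ℕ} {m : ℕ} (hy : y.Pairwise r)
    (h : ∀ s, s <+ x → s.Pairwise r → s.length ≤ m) : LCS x y ≤ m :=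
  LCS_le fun s hx hsy => h s hx (hy.sublist hsy)

section Chains

variable {α : Type*} {r : α → α → Prop}

lemma length_le_one_of_pairwise :
    ∀ {s : List α}, s.Pairwise r → (∀ x ∈ s, ∀ y ∈ s, ¬ r x y) → s.length ≤ 1
  | [], _, _ | [_], _, _ => by simp
  | x :: y :: _, h, hr => absurd ((pairwise_cons.1 h).1 y (by simp)) (hr x (by simp) y (by simp))

lemma sublist_or_sublist_of_pairwise {s u v : List α} (hs : s.Pairwise r) (h : s <+ u ++ v)
    (huv : ∀ x ∈ u, ∀ y ∈ v, ¬ r x y) : s <+ u ∨ s <+ v := by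
  obtain ⟨s₁, s₂, rfl, h₁, h₂⟩ := sublist_append_iff.1 h
  by_cases hs₁ : s₁ = []
  · subst hs₁; exact .inr h₂
  by_cases hs₂ : s₂ = []
  · subst hs₂; exact .inl (by simpa using h₁)
  obtain ⟨x, hx⟩ := exists_mem_of_ne_nil s₁ hs₁
  obtain ⟨y, hy⟩ := exists_mem_of_ne_nil s₂ hs₂
  exact absurd ((pairwise_append.1 hs).2.2 x hx y hy) (huv x (h₁.subset hx) y (h₂.subset hy))

end Chains

lemma pairwise_of_range' {R : ℕ → ℕ → Prop} {s k : ℕ}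
    (h : ∀ x y, s ≤ x → y < s + k → x < y → R x y) : (range' s k).Pairwise R :=
  (pairwise_lt_range' (s := s) (n := k)).imp_of_mem fun hx hy hxy => by
    rw [mem_range'_1] at hx hy; exact h _ _ hx.1 hy.2 hxy

/-- The (1-based) position of the letter `v` in `π^R = X₁ ∘ n⋯1 ∘ X₂`. -/
def posR (n v : ℕ) : ℕ := if v ≤ n then 2 * n + 2 - v else if v ≤ 2 * n + 1 then v - n else v

lemma posR_of_le {n v : ℕ} (h : v ≤ n) : posR n v = 2 * n + 2 - v := if_pos h

lemma posR_of_mem_range' {n v : ℕ} (h : v ∈ range' (n + 1) (n + 1)) : posR n v = v - n := by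
  rw [mem_range'_1] at h
  rw [posR, if_neg (by omega), if_pos (by omega)]

section CutPermutation

variable {n : ℕ} {a b : List ℕ}

lemma pairwise_posR :
    (range' (n + 1) (n + 1) ++ (range' 1 n).reverse ++ range' (2 * n + 2) (n + 1)).Pairwise
      (fun x y => posR n x < posR n y) := by
  simp only [pairwise_append, pairwise_reverse, mem_append, mem_reverse, mem_range'_1]
  refine ⟨⟨pairwise_of_range' ?_, pairwise_of_range' ?_, ?_⟩, pairwise_of_range' ?_, ?_⟩ <;>
    intros <;> simp only [posR] <;> split_ifs <;> omega

lemma range'_append_range'_append_range' :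
    range' 1 n ++ range' (n + 1) (n + 1) ++ range' (2 * n + 2) (n + 1) = range' 1 (3 * n + 2) := by
  rw [show n + 1 = 1 + n by omega, range'_append_1, show 2 * n + 2 = 1 + (n + (1 + n)) by omega,
    range'_append_1]
  congr 1; omega

lemma length_le_of_sublist_of_pairwise_lt (hb : b.Pairwise (· > ·)) (hbn : ∀ y ∈ b, y ≤ n)
    {s : List ℕ} (hs : s.Pairwise (· < ·))
    (h : s <+ a ++ range' (n + 1) (n + 1) ++ b ++ range' (2 * n + 2) (n + 1)) :
    s.length ≤ a.length + (n + 1) + (n + 1) := by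
  rw [append_assoc a] at h
  obtain ⟨t, s₃, rfl, ht, h₃⟩ := sublist_append_iff.1 h
  obtain ⟨s₁, s₂, rfl, h₁, h₂⟩ := sublist_append_iff.1 ht
  have hs₂ : s₂.Pairwise (· < ·) := (pairwise_append.1 (pairwise_append.1 hs).1).2.1
  have hmiddle : s₂.length ≤ n + 1 := by
    rcases sublist_or_sublist_of_pairwise hs₂ h₂ fun x hx y hy hxy => by
        have := hbn y hy; rw [mem_range'_1] at hx; omega with hX | hb'
    · simpa using hX.length_le
    · have := length_le_one_of_pairwise (hs₂.and (hb.sublist hb')) fun _ _ _ _ h => by omega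
      omega
  have hlast : s₃.length ≤ n + 1 := by simpa using h₃.length_le
  simp only [length_append]
  have := h₁.length_le; omega

lemma length_le_of_sublist_of_pairwise_posR (ha : a.Pairwise (· < ·)) (han : ∀ x ∈ a, x ≤ n)
    {s : List ℕ} (hs : s.Pairwise (fun x y => posR n x < posR n y))
    (h : s <+ a ++ range' (n + 1) (n + 1) ++ b ++ range' (2 * n + 2) (n + 1)) :
    s.length ≤ (n + 1) + b.length + (n + 1) := by
  obtain ⟨t, s₃, rfl, ht, h₃⟩ := sublist_append_iff.1 h
  obtain ⟨s₁, s₂, rfl, h₁, h₂⟩ := sublist_append_iff.1 ht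
  have hs₁ : s₁.Pairwise (fun x y => posR n x < posR n y) :=
    (pairwise_append.1 (pairwise_append.1 hs).1).1
  have hfirst : s₁.length ≤ n + 1 := by
    rcases sublist_or_sublist_of_pairwise hs₁ h₁ fun x hx y hy hxy => by
        have hx := han x hx
        rw [posR_of_le hx, posR_of_mem_range' hy] at hxy
        rw [mem_range'_1] at hy; omega with ha' | hX
    · have := length_le_one_of_pairwise (hs₁.and (ha.sublist ha')) fun x hx y hy h => by
        have hx := han x (ha'.subset hx); have hy := han y (ha'.subset hy)
        rw [posR_of_le hx, posR_of_le hy] at h; omega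
      omega
    · simpa using hX.length_le
  have hlast : s₃.length ≤ n + 1 := by simpa using h₃.length_le
  simp only [length_append]
  have := h₂.length_le; omega

lemma le_of_mem_append_of_perm (hab : (a ++ b).Perm (range' 1 n)) {x : ℕ} (hx : x ∈ a ++ b) : x ≤ n := by
  have := mem_range'_1.1 (hab.subset hx); omega

lemma sublist_range'_of_perm (ha : a.Pairwise (· < ·)) (hab : (a ++ b).Perm (range' 1 n)) :
    a <+ range' 1 n :=
  sublist_of_subperm_of_pairwise ((sublist_append_left a b).subperm.trans hab.subperm) ha
    (pairwise_lt_range' (s := 1) (n := n))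

lemma sublist_reverse_range'_of_perm (hb : b.Pairwise (· > ·))
    (hab : (a ++ b).Perm (range' 1 n)) : b <+ (range' 1 n).reverse :=
  sublist_of_subperm_of_pairwise
    ((sublist_append_right a b).subperm.trans (hab.trans (reverse_perm _).symm).subperm) hb
    (pairwise_reverse.2 (pairwise_lt_range' (s := 1) (n := n)))

lemma LCS_cutPerm_piL (ha : a.Pairwise (· < ·)) (hb : b.Pairwise (· > ·))
    (hab : (a ++ b).Perm (range' 1 n)) :
    LCS (a ++ range' (n + 1) (n + 1) ++ b ++ range' (2 * n + 2) (n + 1))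
      (range' 1 n ++ range' (n + 1) (n + 1) ++ range' (2 * n + 2) (n + 1))
      = a.length + (n + 1) + (n + 1) := by
  refine le_antisymm ?_ ?_
  · rw [range'_append_range'_append_range']
    exact LCS_le_of_pairwise pairwise_lt_range' fun s hs hsort =>
      length_le_of_sublist_of_pairwise_lt hb
        (fun y hy => le_of_mem_append_of_perm hab (mem_append_right a hy)) hsort hs
  · simpa [add_assoc] using le_LCS (s := a ++ range' (n + 1) (n + 1) ++ range' (2 * n + 2) (n + 1))
      ((sublist_append_left _ b).append_right _)
      (((sublist_range'_of_perm ha hab).append_right _).append_right _)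

lemma LCS_cutPerm_piR (ha : a.Pairwise (· < ·)) (hb : b.Pairwise (· > ·))
    (hab : (a ++ b).Perm (range' 1 n)) :
    LCS (a ++ range' (n + 1) (n + 1) ++ b ++ range' (2 * n + 2) (n + 1))
      (range' (n + 1) (n + 1) ++ (range' 1 n).reverse ++ range' (2 * n + 2) (n + 1))
      = (n + 1) + b.length + (n + 1) := by
  refine le_antisymm (LCS_le_of_pairwise pairwise_posR fun s hs hsort =>
    length_le_of_sublist_of_pairwise_posR ha
      (fun x hx => le_of_mem_append_of_perm hab (mem_append_left b hx)) hsort hs) ?_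
  have hsub : range' (n + 1) (n + 1) ++ b ++ range' (2 * n + 2) (n + 1) <+
      a ++ range' (n + 1) (n + 1) ++ b ++ range' (2 * n + 2) (n + 1) := by
    rw [append_assoc a]; exact (sublist_append_right a _).append_right _
  simpa [add_assoc] using
    le_LCS hsub (((Sublist.refl _).append (sublist_reverse_range'_of_perm hb hab)).append_right _)

end CutPermutation

theorem legal_cut_permutation_cost (n : ℕ)
    (X1 X2 piL piR : List ℕ)
    (hX1 : X1 = List.range' (n + 1) (n + 1)) (hX2 : X2 = List.range' (2 * n + 2) (n + 1))
    (hL : piL = List.range' 1 n ++ X1 ++ X2)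
    (hR : piR = X1 ++ (List.range' 1 n).reverse ++ X2)
    (a b : List ℕ) (ha : a.Pairwise (· < ·)) (hb : b.Pairwise (· > ·))
    (hab : (a ++ b).Perm (List.range' 1 n))
    (piAB : List ℕ) (hAB : piAB = a ++ X1 ++ b ++ X2) :
    ulamDist piAB piL = n - a.length ∧ ulamDist piAB piR = a.length ∧
      ulamDist piAB piL + ulamDist piAB piR = n := by
  subst hX1 hX2 hL hR hAB
  have hlen : a.length + b.length = n := by simpa using hab.length_eq
  simp only [ulamDist, LCS_cutPerm_piL ha hb hab, LCS_cutPerm_piR ha hb hab, length_append,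
    length_range']
  omega
end
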